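/- arXiv:cs/0605082 — 2 statements merged into one kernel-verified Lean document; each statement's English description precedes it below -/
import Mathlib

section
/- Let Q be a real quadratic form on ℝ^{k+1} with symmetric matrix M, and let det(M + T·I_{k+1}) = T^{k+1} + C_k T^k + ⋯ + C_0. Then the number of negative eigenvalues of M (counted with multiplicity) equals the number of sign variations in the sequence C_0, C_1, …, C_k, 1. -/
/-!
Write `V(q)` for the number of sign variations of the coefficients of `q`. The polynomial
`p = det(M + T·I)` has the real roots `-λᵢ`, so it suffices to show that Descartes' rule is exact
for a real-rooted `p`. Descartes' bound gives `V(p) ≥ #{positive roots}` and, applied to `p(-X)`,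
`V(p(-X)) ≥ #{negative roots}`. Conversely, erasing leading terms one at a time shows
`V(p) + V(p(-X)) ≤ deg p - ord₀ p`, the number of nonzero roots, so both bounds are equalities.
-/

/-- The number of sign variations in a finite sequence of reals: delete the zeros, then
count consecutive pairs with opposite signs. -/
noncomputable def signVar (l : List ℝ) : ℕ :=
  let l' := l.filter (fun a => decide (a ≠ 0))
  (l'.zip l'.tail).countP (fun p => decide (p.1 * p.2 < 0))

open Polynomial

namespace List

theorem zip_reverse_tail_reverse {α : Type*} (l : List α) :
    l.reverse.zip l.reverse.tail = ((l.zip l.tail).map Prod.swap).reverse := by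
  apply List.ext_getElem
  · simp
  · intro i hi _
    simp only [length_zip, length_reverse, length_tail] at hi
    simp only [getElem_zip, getElem_reverse, getElem_tail, getElem_map, length_map, length_zip,
      length_tail, Prod.swap_prod_mk, Prod.mk.injEq]
    constructor <;> congr 1 <;> omega

theorem length_destutter'_ne {α : Type*} [DecidableEq α] (l : List α) (a : α) :
    (l.destutter' (· ≠ ·) a).length = ((a :: l).zip l).countP (fun p => p.1 ≠ p.2) + 1 := by
  induction l generalizing a with
  | nil => simp
  | cons b l ih =>
    by_cases hab : a = b
    · subst hab; simp [ih]
    · simp [hab, ih]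

theorem length_destutter_ne_sub_one {α : Type*} [DecidableEq α] (l : List α) :
    (l.destutter (· ≠ ·)).length - 1 = (l.zip l.tail).countP (fun p => p.1 ≠ p.2) := by
  cases l with
  | nil => simp
  | cons a l => simp [destutter_cons', length_destutter'_ne]

end List

theorem Multiset.countP_pos_add_countP_neg_add_count_zero {R : Type*} [Zero R] [LinearOrder R]
    (s : Multiset R) : s.countP (0 < ·) + s.countP (· < 0) + s.count 0 = Multiset.card s := by
  induction s using Multiset.induction_on with
  | empty => simp
  | cons a s ih =>
    simp only [Multiset.countP_cons, Multiset.count_cons, Multiset.card_cons, ← ih]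
    grind

section SignType

variable {R : Type*} [Ring R] [LinearOrder R] [IsStrictOrderedRing R] {a b : R}

theorem mul_neg_iff_sign_ne (ha : a ≠ 0) (hb : b ≠ 0) :
    a * b < 0 ↔ SignType.sign a ≠ SignType.sign b := by
  rcases ha.lt_or_gt with ha | ha <;> rcases hb.lt_or_gt with hb | hb <;>
    simp [ha, hb, mul_neg_iff, sign_neg, sign_pos, not_lt_of_gt]

theorem sign_eq_neg_sign_iff_mul_neg (hb : b ≠ 0) :
    SignType.sign a = -SignType.sign b ↔ a * b < 0 := by
  rcases lt_trichotomy a 0 with ha | ha | ha <;> rcases hb.lt_or_gt with hb | hb <;>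
    simp [ha, hb, mul_neg_iff, sign_neg, sign_pos, not_lt_of_gt]

end SignType

theorem signVar_reverse (l : List ℝ) : signVar l.reverse = signVar l := by
  simp only [signVar, List.filter_reverse, List.zip_reverse_tail_reverse, List.countP_reverse,
    List.countP_map]
  congr 1
  funext p
  simp [mul_comm]

theorem signVar_eq_length_destutter_sub_one (l : List ℝ) :
    signVar l = (((l.map SignType.sign).filter (· ≠ 0)).destutter (· ≠ ·)).length - 1 := by
  have hfilter : (fun s : SignType => decide (s ≠ 0)) ∘ SignType.sign =
      fun a : ℝ => decide (a ≠ 0) := by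
    funext a; simp
  rw [List.length_destutter_ne_sub_one, List.filter_map, hfilter, ← List.map_tail, List.zip_map,
    List.countP_map, signVar]
  refine List.countP_congr fun p hp => ?_
  have h1 := List.of_mem_filter (List.of_mem_zip hp).1
  have h2 := List.of_mem_filter (List.mem_of_mem_tail (List.of_mem_zip hp).2)
  simp only [decide_eq_true_eq] at h1 h2
  simp [mul_neg_iff_sign_ne h1 h2]

theorem Polynomial.coeffList_eq_reverse_ofFn {R : Type*} [Semiring R] {p : R[X]} (h : p ≠ 0) :
    p.coeffList = (List.ofFn fun i : Fin (p.natDegree + 1) => p.coeff i).reverse := by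
  rw [coeffList, withBotSucc_degree_eq_natDegree_add_one h, List.map_reverse, List.ofFn_eq_map,
    ← List.map_coe_finRange_eq_range, List.map_map]
  rfl

theorem signVar_ofFn_coeff_eq_signVariations {p : ℝ[X]} (hp : p ≠ 0) {n : ℕ}
    (hn : p.natDegree = n) :
    signVar (List.ofFn fun i : Fin (n + 1) => p.coeff i) = p.signVariations := by
  subst hn
  rw [← signVar_reverse, ← coeffList_eq_reverse_ofFn hp, signVar_eq_length_destutter_sub_one]
  rfl

namespace Polynomial

section CommRing

variable {R : Type*} [CommRing R]

theorem coeff_comp_neg_X (p : R[X]) (n : ℕ) : (p.comp (-X)).coeff n = (-1) ^ n * p.coeff n := by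
  induction p using Polynomial.induction_on' with
  | add p q hp hq => simp [hp, hq, mul_add]
  | monomial k c =>
    rw [← C_mul_X_pow_eq_monomial, mul_comp, C_comp, X_pow_comp, neg_pow, ← C_1, ← C_neg, ← C_pow,
      mul_left_comm, ← mul_assoc, ← C_mul, coeff_C_mul_X_pow, coeff_C_mul_X_pow]
    split_ifs with h
    · subst h; ring
    · simp

theorem eraseLead_comp_neg_X (p : R[X]) : (p.comp (-X)).eraseLead = p.eraseLead.comp (-X) := by
  ext n
  simp only [eraseLead_coeff, coeff_comp_neg_X, natDegree_eq_of_degree_eq degree_comp_neg_X]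
  split_ifs <;> simp

end CommRing

theorem signVariations_eq_zero_of_eraseLead_eq_zero {R : Type*} [Semiring R] [LinearOrder R]
    {p : R[X]} (h : p.eraseLead = 0) : p.signVariations = 0 := by
  rw [← eraseLead_add_monomial_natDegree_leadingCoeff p, h, zero_add, signVariations_monomial]

variable {R : Type*} [CommRing R] [LinearOrder R] [IsStrictOrderedRing R]

theorem signVariations_add_signVariations_comp_neg_X_le (p : R[X]) {t : ℕ}
    (ht : ∀ i < t, p.coeff i = 0) :
    p.signVariations + (p.comp (-X)).signVariations ≤ p.natDegree - t := by
  induction hn : p.natDegree using Nat.strong_induction_on generalizing p with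
  | _ n ih =>
  rcases eq_or_ne p.eraseLead 0 with hE | hE
  · rw [signVariations_eq_zero_of_eraseLead_eq_zero hE,
      signVariations_eq_zero_of_eraseLead_eq_zero (by rw [eraseLead_comp_neg_X, hE, zero_comp])]
    exact Nat.zero_le _
  have hp : p ≠ 0 := by rintro rfl; exact hE eraseLead_zero
  set d := p.eraseLead.natDegree with hd
  have hdn : d < n := hn ▸ (eraseLead_natDegree_lt_or_eraseLead_eq_zero p).resolve_right hE
  have hEt : ∀ i < t, p.eraseLead.coeff i = 0 := fun i hi => by
    rw [eraseLead_coeff]; split_ifs <;> simp [ht i hi]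
  have htd : t ≤ d := not_lt.mp fun h => leadingCoeff_ne_zero.mpr hE (hEt d h)
  have ihE := ih d hdn p.eraseLead hEt rfl
  have hb : p.eraseLead.leadingCoeff ≠ 0 := leadingCoeff_ne_zero.mpr hE
  -- When `n = d + 1`, the two top nonzero coefficients change sign in exactly one of `p`, `p(-X)`.
  have hjump : (if p.leadingCoeff * p.eraseLead.leadingCoeff < 0 then 1 else 0) +
      (if (-1) ^ n * p.leadingCoeff * ((-1) ^ d * p.eraseLead.leadingCoeff) < 0 then 1 else 0)
        ≤ n - d := by
    rcases Nat.lt_or_ge (d + 1) n with h | h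
    · split_ifs <;> omega
    · obtain rfl : n = d + 1 := by omega
      have hprod : (-1) ^ (d + 1) * p.leadingCoeff * ((-1) ^ d * p.eraseLead.leadingCoeff) =
          -(p.leadingCoeff * p.eraseLead.leadingCoeff) := by
        rw [show (-1 : R) ^ (d + 1) * p.leadingCoeff * ((-1) ^ d * p.eraseLead.leadingCoeff) =
          (-1) ^ (d + 1 + d) * (p.leadingCoeff * p.eraseLead.leadingCoeff) by ring,
          Odd.neg_one_pow ⟨d, by ring⟩, neg_one_mul]
      rw [hprod]
      split_ifs <;> first | omega | linarith
  rw [signVariations_eq_eraseLead_add_ite hp,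
    signVariations_eq_eraseLead_add_ite (comp_neg_X_eq_zero_iff.not.mpr hp),
    eraseLead_comp_neg_X, comp_neg_X_leadingCoeff_eq, comp_neg_X_leadingCoeff_eq, hn, ← hd]
  simp only [sign_eq_neg_sign_iff_mul_neg hb,
    sign_eq_neg_sign_iff_mul_neg (mul_ne_zero (pow_ne_zero _ (neg_ne_zero.mpr one_ne_zero)) hb)]
  omega

theorem signVariations_eq_roots_countP_pos {p : R[X]} (hroots : p.roots.card = p.natDegree) :
    p.signVariations = p.roots.countP (0 < ·) := by
  have hpos := roots_countP_pos_le_signVariations p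
  have hneg : p.roots.countP (· < 0) ≤ (p.comp (-X)).signVariations := by
    have := roots_countP_pos_le_signVariations (p.comp (-X))
    rw [roots_comp_neg_X, Multiset.countP_map] at this
    simpa [Multiset.countP_eq_card_filter] using this
  have hzero : p.roots.count 0 = p.natTrailingDegree := by
    rw [count_roots, rootMultiplicity_eq_natTrailingDegree']
  have hupper := signVariations_add_signVariations_comp_neg_X_le p
    (fun _ => coeff_eq_zero_of_lt_natTrailingDegree)
  have hcount := p.roots.countP_pos_add_countP_neg_add_count_zero
  omega

end Polynomial

theorem Matrix.IsHermitian.roots_charpoly_neg {n : Type*} [Fintype n] [DecidableEq n]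
    {A : Matrix n n ℝ} (hA : A.IsHermitian) :
    (-A).charpoly.roots = Finset.univ.val.map fun i => -hA.eigenvalues i := by
  rw [← cfc_neg_id (R := ℝ) A hA.isSelfAdjoint, hA.charpoly_cfc_eq, Polynomial.roots_prod]
  · simp
  · simp [Finset.prod_ne_zero_iff, Polynomial.X_add_C_ne_zero]

/-- Descartes' rule of signs for the characteristic polynomial of a real symmetric matrix:
writing `det(M + T·I) = T^{k+1} + C_k T^k + ⋯ + C_0` (i.e. `det(M + T·I)` is the
characteristic polynomial of `-M`), the number of negative eigenvalues of `M`
(with multiplicity) equals the number of sign variations of `C_0, …, C_k, 1`. -/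
theorem stmt5 {k : ℕ} (M : Matrix (Fin (k + 1)) (Fin (k + 1)) ℝ) (hM : M.IsHermitian) :
    (Finset.univ.filter (fun i => hM.eigenvalues i < 0)).card =
      signVar (List.ofFn (fun i : Fin (k + 2) => ((-M).charpoly).coeff i)) := by
  have hdeg : (-M).charpoly.natDegree = k + 1 := by
    rw [Matrix.charpoly_natDegree_eq_dim, Fintype.card_fin]
  have hroots := hM.roots_charpoly_neg
  have hcard : (-M).charpoly.roots.card = (-M).charpoly.natDegree := by simp [hroots, hdeg]
  rw [signVar_ofFn_coeff_eq_signVariations (-M).charpoly_monic.ne_zero hdeg,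
    Polynomial.signVariations_eq_roots_countP_pos hcard, hroots, Multiset.countP_map]
  simp [Finset.card]
end

section
/- Let λ₀ ≤ λ₁ ≤ ⋯ ≤ λ_k be the eigenvalues of a real quadratic form Q on ℝ^{k+1}, and suppose λ_j ≥ 0 while λ_{j-1} < 0 (for some 0 ≤ j ≤ k, with the convention that the second condition is vacuous for j = 0). Then the set { x ∈ S^k : Q(x) ≥ 0 } is homotopy equivalent to the sphere S^{k−j}. -/
/-!
In an orthonormal eigenbasis of `M` the form becomes `∑ λᵢ yᵢ²`, so the set is homeomorphic to
`{y ∈ S^k : ∑ λᵢ yᵢ² ≥ 0}`. Shrinking the coordinates with `λᵢ < 0` linearly to zero and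
renormalizing deforms this set onto the unit sphere in the coordinates with `λᵢ ≥ 0`: the form
only grows along the way, and the path never passes through `0`, because a point with
`∑ λᵢ yᵢ² ≥ 0` whose coordinates with `λᵢ ≥ 0` all vanish is `0`. That sphere has dimension
`#{i | λᵢ ≥ 0} - 1 = k - j`, a count that only depends on the characteristic polynomial.
-/

open Matrix

open Polynomial Finset in
theorem Polynomial.card_filter_eq_of_prod_X_sub_C_eq {R ι : Type*} [CommRing R] [IsDomain R]
    [Fintype ι] {f g : ι → R} (p : R → Prop) [DecidablePred p]
    (h : ∏ i, (X - C (f i)) = ∏ i, (X - C (g i))) :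
    #{i | p (f i)} = #{i | p (g i)} := by
  have hroots (f : ι → R) : (∏ i, (X - C (f i))).roots = univ.val.map f := by
    simpa [Multiset.map_map, Function.comp_def] using roots_multiset_prod_X_sub_C (univ.val.map f)
  have := congrArg (Multiset.countP p) (congrArg roots h)
  simpa only [hroots, Multiset.countP_map, Finset.card, Finset.filter_val] using this

open Finset in
theorem Fin.card_filter_le_of_monotone {α : Type*} [LinearOrder α] {n : ℕ} {f : Fin n → α}
    (hf : Monotone f) {a : α} (j : Fin n) (hj : a ≤ f j) (hlt : ∀ i < j, f i < a) :
    #{i | a ≤ f i} = n - j := by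
  rw [← card_Ici j]
  congr 1
  ext i
  simp only [mem_filter, mem_univ, true_and, mem_Ici]
  exact ⟨fun hi => not_lt.mp fun hij => (hlt i hij).not_ge hi, fun hji => hj.trans (hf hji)⟩

namespace EuclideanSpace

theorem norm_toLp_eq_one_iff {ι : Type*} [Fintype ι] (x : ι → ℝ) :
    ‖WithLp.toLp 2 x‖ = 1 ↔ ∑ i, x i ^ 2 = 1 := by
  rw [← pow_eq_one_iff_of_nonneg (norm_nonneg _) two_ne_zero, real_norm_sq_eq]

variable {ι : Type*} [Fintype ι] (p : ι → Prop) [DecidablePred p]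

noncomputable def restrictSubtype : EuclideanSpace ℝ ι →L[ℝ] EuclideanSpace ℝ {i // p i} :=
  LinearMap.toContinuousLinearMap
    { toFun := fun x => WithLp.toLp 2 fun i => x i
      map_add' := fun _ _ => rfl
      map_smul' := fun _ _ => rfl }

noncomputable def extendByZero : EuclideanSpace ℝ {i // p i} →ₗᵢ[ℝ] EuclideanSpace ℝ ι where
  toFun y := WithLp.toLp 2 fun i => if h : p i then y ⟨i, h⟩ else 0
  map_add' y z := by ext i; by_cases h : p i <;> simp [h]
  map_smul' c y := by ext i; by_cases h : p i <;> simp [h]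
  norm_map' y := by
    simp only [LinearMap.coe_mk, AddHom.coe_mk]
    rw [← sq_eq_sq₀ (norm_nonneg _) (norm_nonneg _), real_norm_sq_eq, real_norm_sq_eq,
      ← Fintype.sum_subtype_add_sum_subtype p]
    have hp (i : {i // p i}) : p i := i.2
    have hnp (i : {i // ¬ p i}) : ¬ p i := i.2
    simp [hp, hnp]

variable {p}

@[simp] theorem restrictSubtype_apply (x : EuclideanSpace ℝ ι) (i : {i // p i}) :
    restrictSubtype p x i = x i := rfl

theorem extendByZero_apply (y : EuclideanSpace ℝ {i // p i}) (i : ι) :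
    extendByZero p y i = if h : p i then y ⟨i, h⟩ else 0 := rfl

@[simp] theorem restrictSubtype_extendByZero (y : EuclideanSpace ℝ {i // p i}) :
    restrictSubtype p (extendByZero p y) = y := by
  ext i; simp [extendByZero_apply, i.2]

end EuclideanSpace

noncomputable def LinearIsometryEquiv.sphereHomeomorph {𝕜 E F : Type*} [NormedField 𝕜]
    [SeminormedAddCommGroup E] [SeminormedAddCommGroup F] [NormedSpace 𝕜 E] [NormedSpace 𝕜 F]
    (e : E ≃ₗᵢ[𝕜] F) (r : ℝ) : Metric.sphere (0 : E) r ≃ₜ Metric.sphere (0 : F) r :=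
  e.toHomeomorph.subtype fun x => by simp

theorem Matrix.IsHermitian.eigenvectorBasis_repr_mulVec {𝕜 n : Type*} [RCLike 𝕜] [Fintype n]
    [DecidableEq n] {A : Matrix n n 𝕜} (hA : A.IsHermitian) (v : EuclideanSpace 𝕜 n) (i : n) :
    hA.eigenvectorBasis.repr (WithLp.toLp 2 (A *ᵥ v)) i =
      hA.eigenvalues i * hA.eigenvectorBasis.repr v i := by
  have hsymm := isSymmetric_toEuclideanLin_iff.mpr hA (hA.eigenvectorBasis i) v
  simp only [toLpLin_apply] at hsymm
  rw [OrthonormalBasis.repr_apply_apply, OrthonormalBasis.repr_apply_apply, ← hsymm,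
    hA.mulVec_eigenvectorBasis, RCLike.real_smul_eq_coe_smul (K := 𝕜), WithLp.toLp_smul,
    WithLp.toLp_ofLp, inner_smul_left, RCLike.conj_ofReal]

def diagonalNonnegSphere {ι : Type*} [Fintype ι] (ν : ι → ℝ) : Set (EuclideanSpace ℝ ι) :=
  {y | ‖y‖ = 1 ∧ 0 ≤ ∑ i, ν i * y i ^ 2}

section

variable {n : Type*} [Fintype n] [DecidableEq n] {A : Matrix n n ℝ}

theorem Matrix.IsHermitian.dotProduct_mulVec_eq_sum_eigenvalues_mul_sq (hA : A.IsHermitian)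
    (x : n → ℝ) :
    x ⬝ᵥ A *ᵥ x = ∑ i, hA.eigenvalues i * hA.eigenvectorBasis.repr (WithLp.toLp 2 x) i ^ 2 := by
  have : x ⬝ᵥ A *ᵥ x = inner ℝ (WithLp.toLp 2 x) (WithLp.toLp 2 (A *ᵥ x)) := by
    simp [EuclideanSpace.inner_toLp_toLp, dotProduct_comm]
  rw [this, ← hA.eigenvectorBasis.repr.inner_map_map, PiLp.inner_apply]
  refine Finset.sum_congr rfl fun i _ => ?_
  simp [hA.eigenvectorBasis_repr_mulVec (WithLp.toLp 2 x) i]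
  ring

noncomputable def Matrix.IsHermitian.nonnegSphereHomeomorph (hA : A.IsHermitian) :
    {x : n → ℝ | ∑ i, x i ^ 2 = 1 ∧ 0 ≤ x ⬝ᵥ A *ᵥ x} ≃ₜ diagonalNonnegSphere hA.eigenvalues :=
  ((EuclideanSpace.equiv n ℝ).symm.toHomeomorph.trans
    hA.eigenvectorBasis.repr.toHomeomorph).subtype fun x => by
      simp [diagonalNonnegSphere, hA.dotProduct_mulVec_eq_sum_eigenvalues_mul_sq,
        EuclideanSpace.norm_toLp_eq_one_iff]

end

namespace diagonalNonnegSphere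

open EuclideanSpace

variable {ι : Type*} [Fintype ι] {ν : ι → ℝ}

theorem eq_zero_of_forall_nonneg_coeff {x : EuclideanSpace ℝ ι}
    (hQ : 0 ≤ ∑ i, ν i * x i ^ 2) (hx : ∀ i, 0 ≤ ν i → x i = 0) : x = 0 := by
  have hterm (i : ι) : ν i * x i ^ 2 ≤ 0 := by
    by_cases hi : 0 ≤ ν i
    · simp [hx i hi]
    · exact mul_nonpos_of_nonpos_of_nonneg (not_le.mp hi).le (sq_nonneg _)
  have hzero := (Finset.sum_eq_zero_iff_of_nonpos fun i _ => hterm i).mp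
    (le_antisymm (Finset.sum_nonpos fun i _ => hterm i) hQ)
  ext i
  by_cases hi : 0 ≤ ν i
  · exact hx i hi
  · simpa [(not_le.mp hi).ne] using hzero i (Finset.mem_univ i)

theorem sum_mul_sq_smul (c : ℝ) (x : EuclideanSpace ℝ ι) :
    ∑ i, ν i * (c • x) i ^ 2 = c ^ 2 * ∑ i, ν i * x i ^ 2 := by
  simp only [PiLp.smul_apply, smul_eq_mul, Finset.mul_sum]
  exact Finset.sum_congr rfl fun i _ => by ring

theorem inv_norm_smul_mem {x : EuclideanSpace ℝ ι} (hx : x ≠ 0) (hQ : 0 ≤ ∑ i, ν i * x i ^ 2) :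
    ‖x‖⁻¹ • x ∈ diagonalNonnegSphere ν :=
  ⟨norm_smul_inv_norm hx, by rw [sum_mul_sq_smul]; positivity⟩

variable (ν) in
noncomputable def squeeze (t : ℝ) (x : EuclideanSpace ℝ ι) : EuclideanSpace ℝ ι :=
  x - t • (x - extendByZero (0 ≤ ν ·) (restrictSubtype (0 ≤ ν ·) x))

theorem squeeze_apply (t : ℝ) (x : EuclideanSpace ℝ ι) (i : ι) :
    squeeze ν t x i = if 0 ≤ ν i then x i else (1 - t) * x i := by
  by_cases hi : 0 ≤ ν i
  · simp [squeeze, extendByZero_apply, hi]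
  · simp [squeeze, extendByZero_apply, hi]
    ring

theorem squeeze_zero (x : EuclideanSpace ℝ ι) : squeeze ν 0 x = x := by
  simp [squeeze]

theorem squeeze_one (x : EuclideanSpace ℝ ι) :
    squeeze ν 1 x = extendByZero (0 ≤ ν ·) (restrictSubtype (0 ≤ ν ·) x) := by
  simp [squeeze]

theorem continuous_squeeze : Continuous fun p : ℝ × EuclideanSpace ℝ ι => squeeze ν p.1 p.2 := by
  unfold squeeze
  fun_prop

theorem squeeze_ne_zero (t : ℝ) {x : EuclideanSpace ℝ ι} (hx : x ∈ diagonalNonnegSphere ν) :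
    squeeze ν t x ≠ 0 := by
  intro h
  have : x = 0 := eq_zero_of_forall_nonneg_coeff hx.2 fun i hi => by
    simpa [squeeze_apply, hi] using congrArg (· i) h
  simp [this, diagonalNonnegSphere] at hx

theorem sum_le_sum_squeeze {t : ℝ} (ht₀ : 0 ≤ t) (ht₁ : t ≤ 1) (x : EuclideanSpace ℝ ι) :
    ∑ i, ν i * x i ^ 2 ≤ ∑ i, ν i * squeeze ν t x i ^ 2 := by
  refine Finset.sum_le_sum fun i _ => ?_
  by_cases hi : 0 ≤ ν i
  · simp [squeeze_apply, hi]
  · have : ((1 - t) * x i) ^ 2 ≤ x i ^ 2 := by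
      rw [mul_pow]
      exact mul_le_of_le_one_left (sq_nonneg _) (pow_le_one₀ (by linarith) (by linarith))
    simpa [squeeze_apply, hi] using mul_le_mul_of_nonpos_left this (not_le.mp hi).le

theorem restrictSubtype_ne_zero {x : EuclideanSpace ℝ ι} (hx : x ∈ diagonalNonnegSphere ν) :
    restrictSubtype (0 ≤ ν ·) x ≠ 0 := by
  intro h
  exact squeeze_ne_zero 1 hx (by rw [squeeze_one, h, map_zero])

noncomputable def toSphere :
    C(diagonalNonnegSphere ν, Metric.sphere (0 : EuclideanSpace ℝ {i // 0 ≤ ν i}) 1) where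
  toFun x := ⟨‖restrictSubtype (0 ≤ ν ·) x.1‖⁻¹ • restrictSubtype (0 ≤ ν ·) x.1,
    mem_sphere_zero_iff_norm.mpr (norm_smul_inv_norm (restrictSubtype_ne_zero x.2))⟩
  continuous_toFun := by
    have hR : Continuous fun x : diagonalNonnegSphere ν => restrictSubtype (0 ≤ ν ·) x.1 := by
      fun_prop
    exact ((hR.norm.inv₀ fun x => norm_ne_zero_iff.mpr (restrictSubtype_ne_zero x.2)).smul
      hR).subtype_mk _

noncomputable def ofSphere :
    C(Metric.sphere (0 : EuclideanSpace ℝ {i // 0 ≤ ν i}) 1, diagonalNonnegSphere ν) where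
  toFun y := ⟨extendByZero _ y.1, by
    refine ⟨by simp, Finset.sum_nonneg fun i _ => ?_⟩
    by_cases hi : 0 ≤ ν i
    · positivity
    · simp [extendByZero_apply, hi]⟩
  continuous_toFun := by fun_prop

theorem toSphere_comp_ofSphere : (toSphere (ν := ν)).comp ofSphere = ContinuousMap.id _ := by
  ext y : 2
  simp [toSphere, ofSphere]

noncomputable def squeezeHomotopy :
    ContinuousMap.Homotopy (ContinuousMap.id (diagonalNonnegSphere ν)) (ofSphere.comp toSphere) where
  toFun p := ⟨‖squeeze ν p.1 p.2.1‖⁻¹ • squeeze ν p.1 p.2.1,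
    inv_norm_smul_mem (squeeze_ne_zero _ p.2.2)
      ((p.2.2.2).trans (sum_le_sum_squeeze p.1.2.1 p.1.2.2 _))⟩
  continuous_toFun := by
    have hc : Continuous fun p : unitInterval × diagonalNonnegSphere ν => squeeze ν p.1 p.2.1 :=
      continuous_squeeze.comp
        (f := fun p : unitInterval × diagonalNonnegSphere ν => ((p.1 : ℝ), p.2.1)) (by fun_prop)
    exact ((hc.norm.inv₀ fun p => norm_ne_zero_iff.mpr (squeeze_ne_zero _ p.2.2)).smul
      hc).subtype_mk _
  map_zero_left x := by
    ext : 1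
    simp [squeeze_zero, x.2.1]
  map_one_left x := by
    ext : 1
    simp [squeeze_one, toSphere, ofSphere]

noncomputable def homotopyEquivSphere :
    ContinuousMap.HomotopyEquiv (diagonalNonnegSphere ν)
      (Metric.sphere (0 : EuclideanSpace ℝ {i // 0 ≤ ν i}) 1) where
  toFun := toSphere
  invFun := ofSphere
  left_inv := ⟨squeezeHomotopy.symm⟩
  right_inv := by rw [toSphere_comp_ofSphere]

end diagonalNonnegSphere

/-- Let `Q(x) = ⟨Mx, x⟩` be a real quadratic form on `ℝ^{k+1}` whose (real, symmetric)
matrix `M` has eigenvalues `λ₀ ≤ ⋯ ≤ λ_k` (with multiplicity, characterized by the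
characteristic polynomial).  If `λ_j ≥ 0` while `λ_i < 0` for all `i < j`, then
`{x ∈ S^k : Q(x) ≥ 0}` is homotopy equivalent to the sphere `S^{k-j}`. -/
theorem stmt7 {k : ℕ} (M : Matrix (Fin (k + 1)) (Fin (k + 1)) ℝ) (hsym : M.IsSymm)
    (lam : Fin (k + 1) → ℝ) (hmono : Monotone lam)
    (heig : M.charpoly = ∏ i, (Polynomial.X - Polynomial.C (lam i)))
    (j : Fin (k + 1)) (hj : 0 ≤ lam j) (hj' : ∀ i, i < j → lam i < 0) :
    Nonempty
      (ContinuousMap.HomotopyEquiv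
        {x : Fin (k + 1) → ℝ | ∑ i, x i ^ 2 = 1 ∧ 0 ≤ x ⬝ᵥ M.mulVec x}
        (Metric.sphere (0 : EuclideanSpace ℝ (Fin (k - (j : ℕ) + 1))) 1)) := by
  have hA : M.IsHermitian := (conjTranspose_eq_transpose_of_trivial M).trans hsym
  have hcard : Fintype.card {i // 0 ≤ hA.eigenvalues i} = k - j + 1 := by
    have hcharpoly := hA.charpoly_eq.symm.trans heig
    simp only [RCLike.ofReal_real_eq_id, id] at hcharpoly
    rw [Fintype.card_subtype, Polynomial.card_filter_eq_of_prod_X_sub_C_eq (0 ≤ ·) hcharpoly,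
      Fin.card_filter_le_of_monotone hmono j hj hj']
    omega
  exact ⟨(hA.nonnegSphereHomeomorph.toHomotopyEquiv.trans
    diagonalNonnegSphere.homotopyEquivSphere).trans
    ((LinearIsometryEquiv.piLpCongrLeft 2 ℝ ℝ (Fintype.equivFinOfCardEq hcard)).sphereHomeomorph
      1).toHomotopyEquiv⟩
end
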